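/- If G and G′ are graphs with the same adjacency spectrum (cospectral), and H is an arbitrary graph, then G ⋆ H and G′ ⋆ H have the same adjacency spectrum. -/

import Mathlib

open Matrix Polynomial BigOperators

/-- The neighbourhood corona `G₁ ⋆ G₂` of two simple graphs. -/
def ncorona {V₁ V₂ : Type*} (G₁ : SimpleGraph V₁) (G₂ : SimpleGraph V₂) :
    SimpleGraph (V₁ ⊕ V₁ × V₂) where
  Adj := fun a b =>
    match a, b with
    | Sum.inl v, Sum.inl w => G₁.Adj v w
    | Sum.inl v, Sum.inr iu => G₁.Adj v iu.1
    | Sum.inr iu, Sum.inl w => G₁.Adj w iu.1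
    | Sum.inr iu, Sum.inr jw => iu.1 = jw.1 ∧ G₂.Adj iu.2 jw.2
  symm := ⟨by
    rintro (v | ⟨i, u⟩) (w | ⟨j, z⟩) h
    · exact G₁.adj_symm h
    · exact h
    · exact h
    · exact ⟨h.1.symm, G₂.adj_symm h.2⟩⟩
  loopless := ⟨by
    rintro (v | ⟨i, u⟩) h
    · exact G₁.loopless.irrefl v h
    · exact G₂.loopless.irrefl u h.2⟩

noncomputable instance {V₁ V₂ : Type*} (G₁ : SimpleGraph V₁) (G₂ : SimpleGraph V₂) :
    DecidableRel (ncorona G₁ G₂).Adj := Classical.decRel _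

/-- The `M`-coronal `Γ_M(x) = 1ᵀ (xI - M)⁻¹ 1`, the sum of the entries of `(xI - M)⁻¹`. -/
noncomputable def coronal {n : Type*} [Fintype n] [DecidableEq n]
    (M : Matrix n n ℝ) (x : ℝ) : ℝ :=
  ∑ i, ∑ j, (x • (1 : Matrix n n ℝ) - M)⁻¹ i j

/-!
Real symmetric matrices with the same characteristic polynomial are orthogonally similar, so
`A(G') = P A(G) P⁻¹`. Ordering the vertices of `G ⋆ H` as `V × ({*} ⊕ W)`, its adjacency matrix is
`A(G) ⊗ K + I ⊗ L`, where `K` and `L` depend only on `H`; conjugating by `P ⊗ I` turns it into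
`A(G') ⊗ K + I ⊗ L`.
-/

open scoped Kronecker

namespace Matrix

variable {l m n o R : Type*} [Fintype l] [Fintype m] [Fintype n]
  [DecidableEq l] [DecidableEq m] [DecidableEq n]

def Similar [Semiring R] (A : Matrix m m R) (B : Matrix n n R) : Prop :=
  ∃ (P : Matrix n m R) (Q : Matrix m n R), P * Q = 1 ∧ Q * P = 1 ∧ P * A * Q = B

namespace Similar

variable {A : Matrix m m R} {B : Matrix n n R}

theorem trans [Semiring R] {C : Matrix l l R} (hAB : A.Similar B) (hBC : B.Similar C) :
    A.Similar C := by
  obtain ⟨P, Q, hPQ, hQP, rfl⟩ := hAB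
  obtain ⟨P', Q', hPQ', hQP', rfl⟩ := hBC
  refine ⟨P' * P, Q * Q', ?_, ?_, ?_⟩
  · rw [Matrix.mul_assoc, ← Matrix.mul_assoc P, hPQ, Matrix.one_mul, hPQ']
  · rw [Matrix.mul_assoc, ← Matrix.mul_assoc Q', hQP', Matrix.one_mul, hQP]
  · simp only [Matrix.mul_assoc]

theorem card_eq [CommRing R] [Nontrivial R] (h : A.Similar B) :
    Fintype.card m = Fintype.card n := by
  obtain ⟨P, Q, hPQ, hQP, -⟩ := h
  refine le_antisymm ?_ ?_
  · calc Fintype.card m = (Q * P).rank := by rw [hQP, rank_one]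
      _ ≤ Q.rank := rank_mul_le_left Q P
      _ ≤ Fintype.card n := rank_le_card_width Q
  · calc Fintype.card n = (P * Q).rank := by rw [hPQ, rank_one]
      _ ≤ P.rank := rank_mul_le_left P Q
      _ ≤ Fintype.card m := rank_le_card_width P

theorem charpoly_eq [CommRing R] [Nontrivial R] (h : A.Similar B) :
    A.charpoly = B.charpoly := by
  have hcard := h.card_eq
  obtain ⟨P, Q, -, hQP, rfl⟩ := h
  have key := charpoly_mul_comm' P (A * Q)
  rw [Matrix.mul_assoc A, hQP, Matrix.mul_one, hcard] at key
  rw [Matrix.mul_assoc]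
  exact ((isRegular_X_pow _).left key).symm

theorem kronecker_add_one_kronecker [CommSemiring R] [Fintype o] [DecidableEq o]
    (h : A.Similar B) (K L : Matrix o o R) : (A ⊗ₖ K + 1 ⊗ₖ L).Similar (B ⊗ₖ K + 1 ⊗ₖ L) := by
  obtain ⟨P, Q, hPQ, hQP, rfl⟩ := h
  refine ⟨P ⊗ₖ 1, Q ⊗ₖ 1, ?_, ?_, ?_⟩
  · rw [← mul_kronecker_mul, hPQ, Matrix.one_mul, one_kronecker_one]
  · rw [← mul_kronecker_mul, hQP, Matrix.one_mul, one_kronecker_one]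
  · simp only [Matrix.mul_add, Matrix.add_mul, ← mul_kronecker_mul, Matrix.one_mul,
      Matrix.mul_one, hPQ]

end Similar

theorem similar_submatrix [Semiring R] (e : n ≃ m) (A : Matrix m m R) :
    A.Similar (A.submatrix e e) := by
  refine ⟨(1 : Matrix m m R).submatrix e (Equiv.refl m),
    (1 : Matrix m m R).submatrix (Equiv.refl m) e, ?_, ?_, ?_⟩
  · rw [submatrix_mul_equiv, Matrix.one_mul, submatrix_one_equiv]
  · rw [submatrix_mul_equiv, Matrix.one_mul, submatrix_one_equiv]
  · rw [one_submatrix_mul, mul_submatrix_one]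
    simp

theorem similar_unitary_mul_mul_star [Semiring R] [StarRing R] (U : unitary (Matrix m m R))
    (A : Matrix m m R) : A.Similar ((U : Matrix m m R) * A * star (U : Matrix m m R)) :=
  ⟨U, star U, Unitary.coe_mul_star_self U, Unitary.coe_star_mul_self U, rfl⟩

theorem IsHermitian.similar_of_charpoly_eq {𝕜 : Type*} [RCLike 𝕜]
    {A : Matrix m m 𝕜} {B : Matrix n n 𝕜} (hA : A.IsHermitian) (hB : B.IsHermitian)
    (h : A.charpoly = B.charpoly) : A.Similar B := by
  have e : m ≃ n := Fintype.equivOfCardEq (by simpa using congrArg natDegree h)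
  have hB' : (B.submatrix e e).IsHermitian := hB.submatrix e
  have h' : A.charpoly = (B.submatrix e e).charpoly := h.trans (charpoly_reindex e.symm B).symm
  have hdiag : B.submatrix e e =
      Unitary.conjStarAlgAut 𝕜 _ (hB'.eigenvectorUnitary * star hA.eigenvectorUnitary) A := by
    rw [Unitary.conjStarAlgAut_mul_apply, hA.conjStarAlgAut_star_eigenvectorUnitary,
      (hA.eigenvalues_eq_eigenvalues_iff hB').mpr h', ← hB'.spectral_theorem]
  have hAB' : A.Similar (B.submatrix e e) := by
    rw [hdiag, Unitary.conjStarAlgAut_apply]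
    exact similar_unitary_mul_mul_star _ A
  simpa only [submatrix_submatrix, e.self_comp_symm, submatrix_id_id] using
    hAB'.trans (similar_submatrix e.symm _)

end Matrix

namespace SimpleGraph

def ncoronaEquiv (V W : Type*) : V × (Unit ⊕ W) ≃ V ⊕ V × W :=
  (Equiv.prodSumDistrib V Unit W).trans (Equiv.sumCongr (Equiv.prodPUnit V) (Equiv.refl _))

theorem adjMatrix_ncorona {V W R : Type*} [DecidableEq V] [NonAssocSemiring R]
    (G : SimpleGraph V) (H : SimpleGraph W) [DecidableRel G.Adj] [DecidableRel H.Adj] :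
    (ncorona G H).adjMatrix R = reindex (ncoronaEquiv V W) (ncoronaEquiv V W)
      (G.adjMatrix R ⊗ₖ fromBlocks 1 (of fun _ _ => 1) (of fun _ _ => 1) 0 +
        1 ⊗ₖ fromBlocks 0 0 0 (H.adjMatrix R)) := by
  ext (v | ⟨v, u⟩) (w | ⟨w, z⟩) <;> rw [adjMatrix_apply] <;>
    simp [ncorona, ncoronaEquiv, one_apply, G.adj_comm w v] <;> grind

end SimpleGraph

/-- Corollary 2.4(a): if `G` and `G'` are adjacency cospectral and `H` is arbitrary, then
`G ⋆ H` and `G' ⋆ H` are adjacency cospectral. -/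
theorem ncorona_cospectral_left {V V' W : Type*} [Fintype V] [Fintype V'] [Fintype W]
    [DecidableEq V] [DecidableEq V'] [DecidableEq W]
    (G : SimpleGraph V) (G' : SimpleGraph V') (H : SimpleGraph W)
    [DecidableRel G.Adj] [DecidableRel G'.Adj] [DecidableRel H.Adj]
    (hcos : (G.adjMatrix ℝ).charpoly = (G'.adjMatrix ℝ).charpoly) :
    ((ncorona G H).adjMatrix ℝ).charpoly = ((ncorona G' H).adjMatrix ℝ).charpoly := by
  have hsim : (G.adjMatrix ℝ).Similar (G'.adjMatrix ℝ) :=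
    (isHermitian_iff_isSymm.mpr G.isSymm_adjMatrix).similar_of_charpoly_eq
      (isHermitian_iff_isSymm.mpr G'.isSymm_adjMatrix) hcos
  rw [SimpleGraph.adjMatrix_ncorona, SimpleGraph.adjMatrix_ncorona, charpoly_reindex,
    charpoly_reindex]
  exact (hsim.kronecker_add_one_kronecker _ _).charpoly_eq
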